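/- arXiv:2309.09613 — 2 statements merged into one kernel-verified Lean document; each statement's English description precedes it below -/
import Mathlib

section
/- Let $\alpha \ge 2$ be a real number, let $n \ge 2$ be an integer, and let $s \ge 2$ be an integer with $s \le \frac{\log_2 n}{2000 \log_2 \alpha}$. Let $1 = q_1 \le q_2 \le \cdots \le q_s = n$ be integers. Then $\sum_{\ell=1}^{s-1} \left\lfloor \log_2 \max\left(1, \frac{1}{10^4 \alpha^2 \sigma_\ell \tau_\ell}\right) \right\rfloor \ge \frac{99}{100} \log_2 n$. -/
/-!
Put `ψ m := σ_m / (q_m τ_{m-1})`. From `σ_{ℓ+1} = σ_ℓ + q_{ℓ+1}`, `q_ℓ τ_{ℓ-1} = 1 + q_ℓ τ_ℓ`,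
`q_ℓ ≤ σ_ℓ`, `q_{ℓ+1} τ_ℓ ≥ 1` and `q_ℓ ≤ q_{ℓ+1}` one gets
`ψ(ℓ+1) / ψ(ℓ) ≤ 4 max(1, 1/(σ_ℓ τ_ℓ))`, so the `ℓ`-th summand is at least
`log₂ ψ(ℓ+1) - log₂ ψ(ℓ) - O(log₂ α)`. The logarithms telescope to
`log₂ ψ(s) - log₂ ψ(1) = log₂ (σ_s τ_0) ≥ log₂ n`, while the `s - 1` error terms cost at most
`19 s log₂ α ≤ log₂ n / 100` by the hypothesis on `s`.
-/

/-- `σ_ℓ := ∑_{i=1}^{ℓ} q_i`, viewed as a real number. -/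
noncomputable def sigmaQ (q : ℕ → ℕ) (ℓ : ℕ) : ℝ := ∑ i ∈ Finset.Icc 1 ℓ, (q i : ℝ)

/-- `τ_ℓ := ∑_{i=ℓ+1}^{s} 1/q_i`, viewed as a real number. -/
noncomputable def tauQ (q : ℕ → ℕ) (s ℓ : ℕ) : ℝ := ∑ i ∈ Finset.Icc (ℓ + 1) s, (1 : ℝ) / q i

open Finset Real

lemma add_mul_one_add_mul_le_four_mul_max {a t p p' : ℝ} (hp : 0 < p) (hpp' : p ≤ p')
    (ha : p ≤ a) (ht : 1 ≤ p' * t) : (a + p') * (1 + p * t) ≤ 4 * p' * max (a * t) 1 := by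
  have ht0 : 0 ≤ t := by nlinarith
  have hat : 0 ≤ a * t := by nlinarith
  have hM : a * t ≤ max (a * t) 1 := le_max_left _ _
  have hM1 : 1 ≤ max (a * t) 1 := le_max_right _ _
  -- each of the four terms `apt`, `a`, `p'pt`, `p'` of the expansion is at most `p' max(at, 1)`
  nlinarith [mul_le_mul_of_nonneg_left hpp' hat, mul_le_mul_of_nonneg_left ht (by linarith : 0 ≤ a),
    mul_le_mul_of_nonneg_right ha (by nlinarith : 0 ≤ p' * t),
    mul_le_mul_of_nonneg_left hM (by linarith : 0 ≤ p'),
    mul_le_mul_of_nonneg_left hM1 (by linarith : 0 ≤ p')]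

lemma logb_div_sub_logb_div_le {B a t p p' : ℝ} (hB : 1 ≤ B) (hp : 0 < p) (hpp' : p ≤ p')
    (ha : p ≤ a) (ht : 1 ≤ p' * t) :
    logb 2 ((a + p') / (p' * t)) - logb 2 (a / (p * (1 / p + t))) ≤
      logb 2 (4 * B) + logb 2 (max 1 (1 / (B * a * t))) := by
  have ha0 : 0 < a := hp.trans_le ha
  have ht0 : 0 < t := by nlinarith
  have hp'0 : 0 < p' := hp.trans_le hpp'
  have hX : 0 < B * a * t := by positivity
  have hmax : max (a * t) 1 ≤ B * max 1 (1 / (B * a * t)) * (a * t) :=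
    calc max (a * t) 1 ≤ max (B * a * t) 1 := max_le_max (by nlinarith) le_rfl
      _ = B * a * t * max 1 (1 / (B * a * t)) := by
        rw [mul_max_of_nonneg _ _ hX.le, mul_one, mul_one_div_cancel hX.ne', max_comm]
      _ = B * max 1 (1 / (B * a * t)) * (a * t) := by ring
  have hpt : p * (1 / p + t) = 1 + p * t := by field_simp
  rw [← logb_div (by positivity) (by positivity), ← logb_mul (by positivity) (by positivity)]
  refine logb_le_logb_of_le one_lt_two (by positivity) ?_
  rw [hpt, div_div_eq_mul_div, div_le_iff₀ ha0, div_mul_eq_mul_div, div_le_iff₀ (by positivity)]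
  calc (a + p') * (1 + p * t) ≤ 4 * p' * max (a * t) 1 :=
        add_mul_one_add_mul_le_four_mul_max hp hpp' ha ht
    _ ≤ 4 * p' * (B * max 1 (1 / (B * a * t)) * (a * t)) := by gcongr
    _ = 4 * B * max 1 (1 / (B * a * t)) * a * (p' * t) := by ring

lemma logb_div_sub_logb_div_sub_le_floor {B a t p p' : ℝ} (hB : 1 ≤ B) (hp : 0 < p)
    (hpp' : p ≤ p') (ha : p ≤ a) (ht : 1 ≤ p' * t) :
    logb 2 ((a + p') / (p' * t)) - logb 2 (a / (p * (1 / p + t))) - (1 + logb 2 (4 * B)) ≤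
      ⌊logb 2 (max 1 (1 / (B * a * t)))⌋ := by
  have := logb_div_sub_logb_div_le hB hp hpp' ha ht
  have := Int.sub_one_lt_floor (logb 2 (max 1 (1 / (B * a * t))))
  linarith

lemma sub_sub_mul_le_sum_Icc {f φ : ℕ → ℝ} {c : ℝ} (m : ℕ)
    (h : ∀ ℓ ∈ Icc 1 m, φ (ℓ + 1) - φ ℓ - c ≤ f ℓ) :
    φ (m + 1) - φ 1 - m * c ≤ ∑ ℓ ∈ Icc 1 m, f ℓ := by
  induction m with
  | zero => simp
  | succ m ih =>
    have hm := h (m + 1) (by simp)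
    have := ih fun ℓ hℓ ↦ h ℓ (Icc_subset_Icc_right m.le_succ hℓ)
    rw [sum_Icc_succ_top (by omega)]
    push_cast
    linarith

lemma one_add_logb_le_mul_logb {α : ℝ} (hα : 2 ≤ α) :
    1 + logb 2 (4 * (10 ^ 4 * α ^ 2)) ≤ 19 * logb 2 α := by
  have hlogα : 1 ≤ logb 2 α := by
    simpa using logb_le_logb_of_le one_lt_two two_pos hα
  have h16 : logb 2 (4 * 10 ^ 4) ≤ 16 := by
    rw [logb_le_iff_le_rpow one_lt_two (by norm_num)]
    norm_num
  rw [← mul_assoc, logb_mul (by norm_num) (by positivity), logb_pow]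
  push_cast
  linarith

lemma natCast_sub_one_mul_one_add_logb_le {α L : ℝ} {s : ℕ} (hα : 2 ≤ α) (hL : 0 ≤ L)
    (hs : (s : ℝ) ≤ L / (2000 * logb 2 α)) :
    ((s - 1 : ℕ) : ℝ) * (1 + logb 2 (4 * (10 ^ 4 * α ^ 2))) ≤ L / 100 := by
  have hlogα : 0 < logb 2 α := logb_pos one_lt_two (by linarith)
  have hs' : (s : ℝ) * (2000 * logb 2 α) ≤ L := (le_div_iff₀ (by positivity)).1 hs
  have hc0 : 0 ≤ 1 + logb 2 (4 * (10 ^ 4 * α ^ 2)) := by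
    have := logb_nonneg one_lt_two (show 1 ≤ 4 * (10 ^ 4 * α ^ 2) by nlinarith)
    linarith
  calc ((s - 1 : ℕ) : ℝ) * (1 + logb 2 (4 * (10 ^ 4 * α ^ 2))) ≤ s * (19 * logb 2 α) :=
        mul_le_mul (by exact_mod_cast Nat.sub_le s 1) (one_add_logb_le_mul_logb hα) hc0
          s.cast_nonneg
    _ ≤ L / 100 := by nlinarith

section

variable (q : ℕ → ℕ) (s : ℕ)

lemma sigmaQ_one : sigmaQ q 1 = q 1 := by simp [sigmaQ]

lemma sigmaQ_succ (ℓ : ℕ) : sigmaQ q (ℓ + 1) = sigmaQ q ℓ + q (ℓ + 1) :=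
  sum_Icc_succ_top (by omega) _

lemma le_sigmaQ {ℓ : ℕ} (hℓ : 1 ≤ ℓ) : (q ℓ : ℝ) ≤ sigmaQ q ℓ :=
  single_le_sum (f := fun i ↦ (q i : ℝ)) (fun _ _ ↦ by positivity) (mem_Icc.2 ⟨hℓ, le_rfl⟩)

lemma tauQ_eq_add {ℓ : ℕ} (hℓ : ℓ < s) : tauQ q s ℓ = 1 / q (ℓ + 1) + tauQ q s (ℓ + 1) := by
  rw [tauQ, tauQ, ← add_sum_Ioc_eq_sum_Icc (by omega), Icc_add_one_left_eq_Ioc]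

lemma one_div_le_tauQ {ℓ : ℕ} (hℓ : ℓ < s) : 1 / (q (ℓ + 1) : ℝ) ≤ tauQ q s ℓ :=
  single_le_sum (f := fun i ↦ 1 / (q i : ℝ)) (fun _ _ ↦ by positivity)
    (mem_Icc.2 ⟨le_rfl, hℓ⟩)

lemma tauQ_sub_one (hs : 1 ≤ s) : tauQ q s (s - 1) = 1 / q s := by
  rw [tauQ, Nat.sub_add_cancel hs, Icc_self, sum_singleton]

/-- `log₂ ψ(m)` for the quantity `ψ` of the header. -/
noncomputable def logPotentialQ (m : ℕ) : ℝ := logb 2 (sigmaQ q m / (q m * tauQ q s (m - 1)))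

lemma logPotentialQ_succ_sub_le_floor {B : ℝ} (hB : 1 ≤ B) {ℓ : ℕ} (hℓ : 1 ≤ ℓ) (hℓs : ℓ < s)
    (hq : 0 < q ℓ) (hqq : q ℓ ≤ q (ℓ + 1)) :
    logPotentialQ q s (ℓ + 1) - logPotentialQ q s ℓ - (1 + logb 2 (4 * B)) ≤
      ⌊logb 2 (max 1 (1 / (B * sigmaQ q ℓ * tauQ q s ℓ)))⌋ := by
  obtain ⟨k, rfl⟩ : ∃ k, ℓ = k + 1 := ⟨ℓ - 1, by omega⟩
  have hq' : (0 : ℝ) < q (k + 1) := by exact_mod_cast hq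
  have hqq' : (q (k + 1) : ℝ) ≤ q (k + 2) := by exact_mod_cast hqq
  have ht := one_div_le_tauQ q s hℓs
  rw [one_div, inv_le_iff_one_le_mul₀ (hq'.trans_le hqq'), mul_comm] at ht
  simp only [logPotentialQ, Nat.add_sub_cancel, sigmaQ_succ q (k + 1),
    tauQ_eq_add q s (by omega : k < s)]
  exact logb_div_sub_logb_div_sub_le_floor hB hq' hqq' (le_sigmaQ q hℓ) ht

lemma logb_le_logPotentialQ_sub (hs : 1 ≤ s) (hq1 : q 1 = 1) (hqs : 0 < q s) :
    logb 2 (q s) ≤ logPotentialQ q s s - logPotentialQ q s 1 := by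
  have hqs' : (0 : ℝ) < q s := by exact_mod_cast hqs
  have hlast : logPotentialQ q s s = logb 2 (sigmaQ q s) := by
    simp only [logPotentialQ, tauQ_sub_one q s hs, mul_one_div_cancel hqs'.ne', div_one]
  have hfirst : logPotentialQ q s 1 ≤ 0 := by
    have hτ := one_div_le_tauQ q s (ℓ := 0) (by omega)
    simp only [zero_add, hq1, Nat.cast_one, div_one] at hτ
    simp only [logPotentialQ, sigmaQ_one, hq1, Nat.sub_self, Nat.cast_one, one_mul]
    exact logb_nonpos one_lt_two (by positivity) ((div_le_one (by positivity)).2 hτ)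
  have hσ := logb_le_logb_of_le one_lt_two hqs' (le_sigmaQ q hs)
  linarith

end

theorem stmt_7 (α : ℝ) (hα : 2 ≤ α) (n : ℕ) (hn : 2 ≤ n) (s : ℕ) (hs : 2 ≤ s)
    (hslog : (s : ℝ) ≤ Real.logb 2 n / (2000 * Real.logb 2 α))
    (q : ℕ → ℕ) (hq1 : q 1 = 1) (hqs : q s = n)
    (hmono : ∀ i j, 1 ≤ i → i ≤ j → j ≤ s → q i ≤ q j) :
    (99 : ℝ) / 100 * Real.logb 2 n ≤
      ((∑ ℓ ∈ Finset.Icc 1 (s - 1),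
        ⌊Real.logb 2 (max 1 (1 / (10 ^ 4 * α ^ 2 * sigmaQ q ℓ * tauQ q s ℓ)))⌋ : ℤ) : ℝ) := by
  have hq : ∀ ℓ, 1 ≤ ℓ → ℓ ≤ s → 0 < q ℓ := fun ℓ h1 h2 ↦ by
    have := hmono 1 ℓ le_rfl h1 h2
    omega
  have hB : (1 : ℝ) ≤ 10 ^ 4 * α ^ 2 := by nlinarith
  have hsum := sub_sub_mul_le_sum_Icc (s - 1) fun ℓ hℓ ↦ by
    obtain ⟨h1, h2⟩ := mem_Icc.1 hℓ
    exact logPotentialQ_succ_sub_le_floor q s hB h1 (by omega) (hq ℓ h1 (by omega))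
      (hmono ℓ (ℓ + 1) h1 (by omega) (by omega))
  rw [Nat.sub_add_cancel (by omega)] at hsum
  have hends := logb_le_logPotentialQ_sub q s (by omega) hq1 (hq s (by omega) le_rfl)
  rw [hqs] at hends
  have hL : 0 ≤ logb 2 n := logb_nonneg one_lt_two (by exact_mod_cast (by omega : 1 ≤ n))
  have hconst := natCast_sub_one_mul_one_add_logb_le hα hL hslog
  push_cast
  linarith
end

section
/- Let $n, d, \alpha$ be positive integers with $\alpha \ge 2$ and $\alpha d \le n/2$, and set $z = n/d$. Let $Q_1, \ldots, Q_s \subseteq [n]$ be nonempty sets with $q_i := |Q_i|$, and suppose both $\sum_{i : q_i \le z} q_i \le \frac{z}{100\alpha}$ and $\sum_{i : q_i \ge z} \frac{1}{q_i} \le \frac{1}{100\alpha z}$. Draw a random nested pair $(I_0, I_1)$ as follows: $I_0$ is uniform over the $d$-element subsets of $[n]$, and given $I_0$, the set $I_1$ is uniform over the $\alpha d$-element subsets of $[n]$ containing $I_0$. Then $\Pr\left[\exists\, i \in \{1,\ldots,s\} : \mathbb{1}[I_0 \cap Q_i \ne \emptyset] \ne \mathbb{1}[I_1 \cap Q_i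 \ne \emptyset]\right] \le \frac{3}{100}$; that is, with probability at least $97/100$ the test-outcome vectors $(\mathbb{1}[I_0 \cap Q_i \ne \emptyset])_{i=1}^s$ and $(\mathbb{1}[I_1 \cap Q_i \ne \emptyset])_{i=1}^s$ coincide. -/
/-- The family of nested pairs `(I₀, I₁)` with `I₀ ⊆ I₁`, `|I₀| = d` and `|I₁| = D`,
over the ground set `Fin n`. -/
def nestedPairs (n d D : ℕ) : Finset (Finset (Fin n) × Finset (Fin n)) :=
  (((Finset.univ : Finset (Fin n)).powersetCard d) ×ˢ
    ((Finset.univ : Finset (Fin n)).powersetCard D)).filter (fun p => p.1 ⊆ p.2)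

/-!
Since `I₀ ⊆ I₁`, a test `Q` separates the two sets only when `I₀` misses `Q` and `I₁` meets
it. For `|Q| = q` the first event has probability
`C(n - q, d) / C(n, d) ≤ (1 - q/n)^d ≤ exp (-dq/n) ≤ n / (dq)`,
and the second has probability at most `q · αd / n`, as each point lies in `I₁` with probability
`αd / n`. Using the second bound for tests with `q ≤ n/d` and the first for the others, the union
bound and the two hypotheses on the test sizes give `1/100 + 1/(100α) ≤ 3/100`.
-/

open Finset

namespace Finset

variable {α ι : Type*}

lemma card_filter_exists_le (s : Finset α) (t : Finset ι) (P : ι → α → Prop)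
    [∀ i, DecidablePred (P i)] [DecidablePred fun a => ∃ i ∈ t, P i a] :
    #(s.filter fun a => ∃ i ∈ t, P i a) ≤ ∑ i ∈ t, #(s.filter (P i)) := by
  classical
  calc #(s.filter fun a => ∃ i ∈ t, P i a) ≤ #(t.biUnion fun i => s.filter (P i)) := by
        refine card_le_card fun a ha => ?_
        obtain ⟨has, i, hi, hPia⟩ := mem_filter.1 ha
        exact mem_biUnion.2 ⟨i, hi, mem_filter.2 ⟨has, hPia⟩⟩
    _ ≤ ∑ i ∈ t, #(s.filter (P i)) := card_biUnion_le

variable {β : Type*}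

lemma card_filter_product_eq_sum_left (s : Finset α) (t : Finset β) (R : α → β → Prop)
    [∀ a, DecidablePred (R a)] :
    #((s ×ˢ t).filter fun p => R p.1 p.2) = ∑ a ∈ s, #(t.filter (R a)) := by
  simp only [card_filter, sum_product]

lemma card_filter_product_eq_sum_right (s : Finset α) (t : Finset β) (R : α → β → Prop)
    [∀ a, DecidablePred (R a)] [∀ b, DecidablePred (R · b)] :
    #((s ×ˢ t).filter fun p => R p.1 p.2) = ∑ b ∈ t, #(s.filter (R · b)) := by
  simp only [card_filter, sum_product_right]

variable [Fintype α] [DecidableEq α]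

lemma card_filter_mem_powersetCard_univ_mul (a : α) (D : ℕ) :
    #((univ.powersetCard D).filter (a ∈ ·)) * Fintype.card α =
      D * (Fintype.card α).choose D := by
  obtain ⟨m, hm⟩ : ∃ m, Fintype.card α = m + 1 :=
    Nat.exists_eq_add_one.2 (Fintype.card_pos_iff.2 ⟨a⟩)
  cases D with
  | zero => simp
  | succ k =>
    have h := card_filter_powersetCard_subset {a} univ (k + 1) (subset_univ _) (by simp)
    simp only [singleton_subset_iff, card_singleton, card_univ, hm] at h
    rw [h, hm, Nat.add_sub_cancel, Nat.add_sub_cancel, mul_comm, Nat.add_one_mul_choose_eq,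
      mul_comm]

lemma filter_disjoint_powersetCard_univ (Q : Finset α) (d : ℕ) :
    (univ.powersetCard d).filter (Disjoint · Q) = Qᶜ.powersetCard d := by
  ext A
  simp [mem_powersetCard, subset_compl_iff_disjoint_right, and_comm]

lemma filter_subset_powersetCard_univ (B : Finset α) (d : ℕ) :
    (univ.powersetCard d).filter (· ⊆ B) = B.powersetCard d := by
  ext A
  simp [mem_powersetCard, and_comm]

end Finset

lemma Nat.sub_sub_mul_le (n q i : ℕ) : (n - q - i) * n ≤ (n - i) * (n - q) := by
  rcases Nat.le_total n (q + i) with h | h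
  · simp [show n - q - i = 0 by omega]
  · zify [h, show q ≤ n by omega, show i ≤ n by omega, show i ≤ n - q by omega]
    nlinarith

lemma Nat.choose_sub_mul_pow_le (n q d : ℕ) :
    (n - q).choose d * n ^ d ≤ n.choose d * (n - q) ^ d := by
  have h : (n - q).descFactorial d * n ^ d ≤ n.descFactorial d * (n - q) ^ d := by
    simpa [Nat.descFactorial_eq_prod_range, prod_mul_distrib] using
      prod_le_prod' (s := range d) fun i _ => Nat.sub_sub_mul_le n q i
  rw [Nat.descFactorial_eq_factorial_mul_choose, Nat.descFactorial_eq_factorial_mul_choose,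
    mul_assoc, mul_assoc] at h
  exact Nat.le_of_mul_le_mul_left h (Nat.factorial_pos d)

lemma one_sub_pow_mul_le_one {t : ℝ} (ht0 : 0 ≤ t) (ht1 : t ≤ 1) (d : ℕ) :
    (1 - t) ^ d * (d * t) ≤ 1 := by
  have hexp : (1 - t) ^ d ≤ Real.exp (-(d * t)) := by
    rw [neg_mul_eq_mul_neg, Real.exp_nat_mul]
    exact pow_le_pow_left₀ (by linarith) (Real.one_sub_le_exp_neg t) d
  calc (1 - t) ^ d * (d * t) ≤ Real.exp (-(d * t)) * (d * t + 1) := by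
        gcongr
        linarith
    _ ≤ Real.exp (-(d * t)) * Real.exp (d * t) := by gcongr; exact Real.add_one_le_exp _
    _ = 1 := by rw [← Real.exp_add, neg_add_cancel, Real.exp_zero]

lemma Nat.cast_choose_sub_mul_le {n q : ℕ} (hq : q ≤ n) (d : ℕ) :
    ((n - q).choose d : ℝ) * (d * q) ≤ n * n.choose d := by
  rcases Nat.eq_zero_or_pos n with rfl | hn
  · simp [Nat.le_zero.1 hq]
  have hn' : (0 : ℝ) < n := by exact_mod_cast hn
  set t : ℝ := q / n
  have hsub : ((n - q : ℕ) : ℝ) = n * (1 - t) := by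
    rw [Nat.cast_sub hq, mul_one_sub, mul_div_cancel₀ _ hn'.ne']
  have hratio : ((n - q).choose d : ℝ) ≤ n.choose d * (1 - t) ^ d := by
    have h : ((n - q).choose d : ℝ) * n ^ d ≤ n.choose d * ((n - q : ℕ) : ℝ) ^ d := by
      exact_mod_cast Nat.choose_sub_mul_pow_le n q d
    rw [hsub, mul_pow, mul_left_comm, mul_comm] at h
    exact le_of_mul_le_mul_left (by linarith) (pow_pos hn' d)
  have ht0 : 0 ≤ t := by positivity
  have ht1 : t ≤ 1 := div_le_one_of_le₀ (by exact_mod_cast hq) hn'.le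
  calc ((n - q).choose d : ℝ) * (d * q) = (n - q).choose d * (d * t) * n := by
        simp only [t]; field_simp
    _ ≤ n.choose d * (1 - t) ^ d * (d * t) * n := by gcongr
    _ = n.choose d * ((1 - t) ^ d * (d * t)) * n := by ring
    _ ≤ n.choose d * 1 * n := by gcongr; exact one_sub_pow_mul_le_one ht0 ht1 d
    _ = n * n.choose d := by ring

section NestedPairs

variable {n d D : ℕ}

lemma mem_nestedPairs {p : Finset (Fin n) × Finset (Fin n)} :
    p ∈ nestedPairs n d D ↔ #p.1 = d ∧ #p.2 = D ∧ p.1 ⊆ p.2 := by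
  simp [nestedPairs, mem_powersetCard, and_assoc]

lemma card_nestedPairs_filter_fst (hdD : d ≤ D) (P : Finset (Fin n) → Prop) [DecidablePred P] :
    #((nestedPairs n d D).filter (P ·.1))
      = #((univ.powersetCard d).filter P) * (n - d).choose (D - d) := by
  rw [nestedPairs, filter_filter,
    card_filter_product_eq_sum_left _ _ (fun A B => A ⊆ B ∧ P A), card_filter, sum_mul]
  refine sum_congr rfl fun A hA => ?_
  have hAd : #A = d := (mem_powersetCard.1 hA).2
  by_cases hPA : P A
  · simp [hPA, card_filter_powersetCard_subset A univ D (subset_univ A) (hAd ▸ hdD), hAd]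
  · simp [hPA]

lemma card_nestedPairs_filter_snd (P : Finset (Fin n) → Prop) [DecidablePred P] :
    #((nestedPairs n d D).filter (P ·.2)) = #((univ.powersetCard D).filter P) * D.choose d := by
  rw [nestedPairs, filter_filter,
    card_filter_product_eq_sum_right _ _ (fun A B => A ⊆ B ∧ P B), card_filter, sum_mul]
  refine sum_congr rfl fun B hB => ?_
  have hBD : #B = D := (mem_powersetCard.1 hB).2
  by_cases hPB : P B
  · simp [hPB, filter_subset_powersetCard_univ, card_powersetCard, hBD]
  · simp [hPB]

lemma card_nestedPairs_eq_fst (hdD : d ≤ D) :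
    #(nestedPairs n d D) = n.choose d * (n - d).choose (D - d) := by
  simpa using card_nestedPairs_filter_fst (n := n) hdD (fun _ => True)

lemma card_nestedPairs_eq_snd : #(nestedPairs n d D) = n.choose D * D.choose d := by
  simpa using card_nestedPairs_filter_snd (n := n) (d := d) (D := D) (fun _ => True)

end NestedPairs

def mismatchPairs (n d D : ℕ) (Q : Finset (Fin n)) : Finset (Finset (Fin n) × Finset (Fin n)) :=
  (nestedPairs n d D).filter fun p => ¬((p.1 ∩ Q).Nonempty ↔ (p.2 ∩ Q).Nonempty)

section Mismatch

variable {n d D : ℕ}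

lemma mismatchPairs_eq_filter (Q : Finset (Fin n)) :
    mismatchPairs n d D Q =
      (nestedPairs n d D).filter fun p => Disjoint p.1 Q ∧ ¬Disjoint p.2 Q := by
  refine filter_congr fun p hp => ?_
  have hsub := (mem_nestedPairs.1 hp).2.2
  simp only [← not_disjoint_iff_nonempty_inter]
  have : Disjoint p.2 Q → Disjoint p.1 Q := Disjoint.mono_left hsub
  tauto

lemma card_mismatchPairs_mul_le (Q : Finset (Fin n)) :
    #(mismatchPairs n d D Q) * n ≤ #Q * (D * #(nestedPairs n d D)) := by
  calc #(mismatchPairs n d D Q) * n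
      ≤ #((nestedPairs n d D).filter fun p => ∃ x ∈ Q, x ∈ p.2) * n := by
        rw [mismatchPairs_eq_filter]
        gcongr with p
        rintro ⟨-, h⟩
        simpa [not_disjoint_iff, and_comm] using h
    _ ≤ (∑ x ∈ Q, #((nestedPairs n d D).filter fun p => x ∈ p.2)) * n := by
        gcongr; exact card_filter_exists_le _ _ _
    _ = #Q * (D * #(nestedPairs n d D)) := by
        rw [sum_mul, card_nestedPairs_eq_snd, sum_congr rfl fun x _ => ?_, sum_const,
          smul_eq_mul]
        have h := card_filter_mem_powersetCard_univ_mul x D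
        rw [Fintype.card_fin] at h
        rw [card_nestedPairs_filter_snd (x ∈ ·), mul_right_comm, h, mul_assoc]

lemma card_mismatchPairs_le (hdD : d ≤ D) (Q : Finset (Fin n)) :
    #(mismatchPairs n d D Q) ≤ (n - #Q).choose d * (n - d).choose (D - d) := by
  calc #(mismatchPairs n d D Q) ≤ #((nestedPairs n d D).filter (Disjoint ·.1 Q)) := by
        rw [mismatchPairs_eq_filter]
        gcongr with p
        exact And.left
    _ = (n - #Q).choose d * (n - d).choose (D - d) := by
        rw [card_nestedPairs_filter_fst hdD (Disjoint · Q), filter_disjoint_powersetCard_univ,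
          card_powersetCard, card_compl, Fintype.card_fin]

lemma card_mismatchPairs_div_le_card_mul (hn : 0 < n) (Q : Finset (Fin n)) :
    (#(mismatchPairs n d D Q) : ℝ) / #(nestedPairs n d D) ≤ #Q * (D / n) := by
  have h : (#(mismatchPairs n d D Q) : ℝ) * n ≤ #Q * (D * #(nestedPairs n d D)) := by
    exact_mod_cast card_mismatchPairs_mul_le Q
  refine div_le_of_le_mul₀ (by positivity) (by positivity) ?_
  rw [mul_div_assoc', div_mul_eq_mul_div, le_div_iff₀ (by exact_mod_cast hn)]
  linarith

lemma card_mismatchPairs_div_le_div_card (hd : 0 < d) (hdD : d ≤ D) {Q : Finset (Fin n)}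
    (hQ : Q.Nonempty) :
    (#(mismatchPairs n d D Q) : ℝ) / #(nestedPairs n d D) ≤ n / d / #Q := by
  have hcount :
      (#(mismatchPairs n d D Q) : ℝ) ≤ (n - #Q).choose d * (n - d).choose (D - d) := by
    exact_mod_cast card_mismatchPairs_le hdD Q
  have hchoose := Nat.cast_choose_sub_mul_le (card_le_univ Q |>.trans_eq (Fintype.card_fin n)) d
  have hdQ : (0 : ℝ) < d * #Q := by have := hQ.card_pos; positivity
  refine div_le_of_le_mul₀ (by positivity) (by positivity) ?_
  rw [div_div, div_mul_eq_mul_div, le_div_iff₀ hdQ, card_nestedPairs_eq_fst hdD]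
  push_cast
  calc (#(mismatchPairs n d D Q) : ℝ) * (d * #Q)
      ≤ (n - #Q).choose d * (n - d).choose (D - d) * (d * #Q) := by gcongr
    _ ≤ n * n.choose d * (n - d).choose (D - d) := by
        rw [mul_right_comm]; gcongr
    _ = n * (n.choose d * (n - d).choose (D - d)) := by ring

lemma card_mismatchPairs_div_le (hn : 0 < n) (hd : 0 < d) (hdD : d ≤ D) (Q : Finset (Fin n)) :
    (#(mismatchPairs n d D Q) : ℝ) / #(nestedPairs n d D) ≤
      (if (#Q : ℝ) ≤ n / d then (#Q : ℝ) * (D / n) else 0)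
        + (if (n / d : ℝ) ≤ #Q then 1 / (#Q : ℝ) * (n / d) else 0) := by
  by_cases hsmall : (#Q : ℝ) ≤ n / d
  · have hlarge : 0 ≤ if n / d ≤ (#Q : ℝ) then 1 / (#Q : ℝ) * (n / d) else 0 := by
      split_ifs <;> positivity
    rw [if_pos hsmall]
    linarith [card_mismatchPairs_div_le_card_mul (d := d) (D := D) hn Q]
  · have hlarge : n / d ≤ (#Q : ℝ) := (not_le.1 hsmall).le
    have hQ : Q.Nonempty :=
      card_pos.1 (by exact_mod_cast (by positivity : (0 : ℝ) < n / d).trans_le hlarge)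
    rw [if_neg hsmall, if_pos hlarge, zero_add, one_div_mul_eq_div]
    exact card_mismatchPairs_div_le_div_card hd hdD hQ

lemma card_filter_exists_mismatch_le {ι : Type*} (t : Finset ι) (Q : ι → Finset (Fin n)) :
    #((nestedPairs n d D).filter fun p =>
        ∃ i ∈ t, ¬((p.1 ∩ Q i).Nonempty ↔ (p.2 ∩ Q i).Nonempty))
      ≤ ∑ i ∈ t, #(mismatchPairs n d D (Q i)) :=
  card_filter_exists_le (nestedPairs n d D) t
    fun i p => ¬((p.1 ∩ Q i).Nonempty ↔ (p.2 ∩ Q i).Nonempty)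

end Mismatch

open scoped Classical in
theorem stmt_15_general (n d α : ℕ) (hn : 0 < n) (hd : 0 < d) (hα : 2 ≤ α)
    (s : ℕ) (Q : ℕ → Finset (Fin n))
    (hsum1 : ∑ i ∈ (Finset.Icc 1 s).filter
        (fun i => ((Q i).card : ℝ) ≤ (n : ℝ) / d), ((Q i).card : ℝ)
      ≤ ((n : ℝ) / d) / (100 * α))
    (hsum2 : ∑ i ∈ (Finset.Icc 1 s).filter
        (fun i => (n : ℝ) / d ≤ ((Q i).card : ℝ)), (1 : ℝ) / (Q i).card
      ≤ 1 / (100 * α * ((n : ℝ) / d))) :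
    (((nestedPairs n d (α * d)).filter (fun p => ∃ i ∈ Finset.Icc 1 s,
        ¬((p.1 ∩ Q i).Nonempty ↔ (p.2 ∩ Q i).Nonempty))).card : ℝ)
      / ((nestedPairs n d (α * d)).card : ℝ)
      ≤ 3 / 100 := by
  set D := α * d
  have hdD : d ≤ D := Nat.le_mul_of_pos_left d (by omega)
  have hα1 : (1 : ℝ) ≤ α := by exact_mod_cast (by omega : 1 ≤ α)
  set z : ℝ := n / d
  calc _ ≤ (∑ i ∈ Icc 1 s, (#(mismatchPairs n d D (Q i)) : ℝ)) / #(nestedPairs n d D) := by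
        gcongr
        norm_cast
        convert card_filter_exists_mismatch_le (Icc 1 s) Q
    _ ≤ ∑ i ∈ Icc 1 s, ((if (#(Q i) : ℝ) ≤ z then (#(Q i) : ℝ) * (D / n) else 0)
        + (if z ≤ #(Q i) then 1 / #(Q i) * z else 0)) := by
        rw [sum_div]
        exact sum_le_sum fun i _ => card_mismatchPairs_div_le hn hd hdD (Q i)
    _ = (∑ i ∈ (Icc 1 s).filter (fun i => #(Q i) ≤ z), (#(Q i) : ℝ)) * (D / n)
        + (∑ i ∈ (Icc 1 s).filter (fun i => z ≤ #(Q i)), 1 / (#(Q i) : ℝ)) * z := by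
        rw [sum_add_distrib, sum_mul, sum_mul, sum_filter, sum_filter]
    _ ≤ z / (100 * α) * (D / n) + 1 / (100 * α * z) * z := by gcongr
    _ = 1 / 100 + 1 / (100 * α) := by simp only [z, D]; push_cast; field_simp
    _ ≤ 3 / 100 := by
        have : 1 / (100 * (α : ℝ)) ≤ 1 / 100 := by gcongr; linarith
        linarith

open scoped Classical in
theorem stmt_15 (n d α : ℕ) (hn : 0 < n) (hd : 0 < d) (hα : 2 ≤ α)
    (hαd : 2 * (α * d) ≤ n) (s : ℕ) (Q : ℕ → Finset (Fin n))
    (hQ : ∀ i ∈ Finset.Icc 1 s, (Q i).Nonempty)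
    (hsum1 : ∑ i ∈ (Finset.Icc 1 s).filter
        (fun i => ((Q i).card : ℝ) ≤ (n : ℝ) / d), ((Q i).card : ℝ)
      ≤ ((n : ℝ) / d) / (100 * α))
    (hsum2 : ∑ i ∈ (Finset.Icc 1 s).filter
        (fun i => (n : ℝ) / d ≤ ((Q i).card : ℝ)), (1 : ℝ) / (Q i).card
      ≤ 1 / (100 * α * ((n : ℝ) / d))) :
    (((nestedPairs n d (α * d)).filter (fun p => ∃ i ∈ Finset.Icc 1 s,
        ¬((p.1 ∩ Q i).Nonempty ↔ (p.2 ∩ Q i).Nonempty))).card : ℝ)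
      / ((nestedPairs n d (α * d)).card : ℝ)
      ≤ 3 / 100 :=
  stmt_15_general n d α hn hd hα s Q hsum1 hsum2
end
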